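/- arXiv:2309.16619 — 7 statements merged into one kernel-verified Lean document; each statement's English description precedes it below -/
import Mathlib

section
/- A function φ : [1]^m → [1]^n between finite Boolean lattices is a surjective lattice homomorphism if and only if it is a composite of codegeneracies (projections deleting one coordinate) and principal coordinate transpositions (transpositions of adjacent coordinates). -/
/-! A lattice homomorphism `f : [1]^m → [1]` taking both values is a coordinate projection:
`⊤` is the join of the atoms, so `f` sends some atom `e_k` to `⊤`, hence the complementary
coatom `e_kᶜ` to `f (e_k ⊓ e_kᶜ) = ⊥`; every `x` lies above `e_k` or below `e_kᶜ` according to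
`x k`. Applied coordinatewise, a surjective lattice homomorphism `[1]^m → [1]^n` is `x ↦ x ∘ s`,
and surjectivity forces `s : [n] → [m]` to be injective. Conversely, precomposition with an
injection is a composite of the generators: if `s` misses a coordinate it factors through the
codegeneracy deleting it, and otherwise it is a permutation, a product of adjacent
transpositions. -/

/-- Composites of codegeneracies (projections deleting one coordinate) and
principal coordinate transpositions (transpositions of adjacent coordinates)
between finite Boolean lattices. -/
inductive DegenTranspComposite :
    ∀ {m n : ℕ}, ((Fin m → Bool) → (Fin n → Bool)) → Prop
  | id (n : ℕ) : DegenTranspComposite (id : (Fin n → Bool) → (Fin n → Bool))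
  | codeg {m n : ℕ} (f : (Fin m → Bool) → (Fin n → Bool)) (j : Fin (m + 1)) :
      DegenTranspComposite f →
      DegenTranspComposite (fun x : Fin (m + 1) → Bool => f (x ∘ j.succAbove))
  | transp {m n : ℕ} (f : (Fin m → Bool) → (Fin n → Bool)) (i j : Fin m)
      (h : (j : ℕ) = (i : ℕ) + 1) :
      DegenTranspComposite f →
      DegenTranspComposite (fun x : Fin m → Bool => f (x ∘ Equiv.swap i j))

open Function

namespace LatticeHom

variable {ι : Type*}

lemma exists_coe_eq_eval_of_surjective [Finite ι] (f : LatticeHom (ι → Bool) Bool)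
    (hf : Surjective f) : ∃ k, ⇑f = eval k := by
  classical
  have : Fintype ι := Fintype.ofFinite ι
  have hbot : f ⊥ = false := by
    obtain ⟨x, hx⟩ := hf false
    exact le_bot_iff.1 ((OrderHomClass.mono f bot_le).trans_eq hx)
  have htop : f ⊤ = true := by
    obtain ⟨x, hx⟩ := hf true
    exact top_le_iff.1 (hx.symm.trans_le (OrderHomClass.mono f le_top))
  have hsup_atoms : Finset.univ.sup (fun k t => decide (t = k)) = (⊤ : ι → Bool) := by
    funext t
    rw [Finset.sup_apply]
    exact Finset.sup_eq_top_iff.2 ⟨t, Finset.mem_univ t, by simp⟩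
  obtain ⟨k, -, hk⟩ : ∃ k ∈ Finset.univ, f (fun t => decide (t = k)) = ⊤ := by
    rw [← Finset.sup_eq_top_iff, ← comp_def f, ← Finset.apply_sup_eq_sup_comp f (map_sup f) hbot,
      hsup_atoms, htop]
    rfl
  have hcoatom : f (fun t => decide (t = k))ᶜ = false := by
    rw [← hbot, ← inf_compl_eq_bot (a := fun t => decide (t = k)), map_inf, hk, top_inf_eq]
  refine ⟨k, funext fun x => ?_⟩
  rw [eval]
  cases hx : x k
  · have : x ≤ (fun t => decide (t = k))ᶜ := fun t => by
      by_cases ht : t = k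
      · subst ht; simp [hx]
      · simp [ht]
    exact le_bot_iff.1 ((OrderHomClass.mono f this).trans_eq hcoatom)
  · have : (fun t => decide (t = k)) ≤ x := fun t => by
      by_cases ht : t = k
      · subst ht; simp [hx]
      · simp [ht]
    exact top_le_iff.1 (hk.symm.trans_le (OrderHomClass.mono f this))

lemma exists_injective_coe_eq_comp_of_surjective {κ : Type*} [Finite ι]
    (φ : LatticeHom (ι → Bool) (κ → Bool)) (hφ : Surjective φ) :
    ∃ s : κ → ι, Injective s ∧ ⇑φ = fun x => x ∘ s := by
  classical
  have hcoord (i : κ) : ∃ k, ⇑((Pi.evalLatticeHom i).comp φ) = eval k :=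
    exists_coe_eq_eval_of_surjective _ ((surjective_eval i).comp hφ)
  choose s hs using hcoord
  have hφs : ⇑φ = fun x => x ∘ s := funext fun x => funext fun i => congrFun (hs i) x
  refine ⟨s, fun i i' hii' => ?_, hφs⟩
  obtain ⟨x, hx⟩ := hφ fun t => decide (t = i)
  have hxs (j : κ) : x (s j) = decide (j = i) := by rw [← congrFun hx j, hφs]; rfl
  have : decide (i' = i) = true := by rw [← hxs, ← hii', hxs, decide_eq_true rfl]
  exact (of_decide_eq_true this).symm

end LatticeHom

namespace DegenTranspComposite

lemma comp_perm {m n : ℕ} {f : (Fin m → Bool) → (Fin n → Bool)} (hf : DegenTranspComposite f)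
    (e : Equiv.Perm (Fin m)) : DegenTranspComposite fun x => f (x ∘ e) := by
  cases m with
  | zero => simpa [Subsingleton.elim e 1] using hf
  | succ m =>
    have he : e ∈ Submonoid.closure (Set.range fun i : Fin m => Equiv.swap i.castSucc i.succ) := by
      rw [Equiv.Perm.mclosure_swap_castSucc_succ]
      trivial
    induction he using Submonoid.closure_induction generalizing f with
    | mem _ hσ =>
      obtain ⟨i, rfl⟩ := hσ
      exact transp f i.castSucc i.succ (by simp) hf
    | one => simpa using hf
    | mul a b _ _ ha hb => exact ha (hb hf)

lemma comp_of_bijective {m n : ℕ} {s : Fin n → Fin m} (hs : Bijective s) :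
    DegenTranspComposite fun x : Fin m → Bool => x ∘ s := by
  obtain rfl : n = m := by simpa using Fintype.card_of_bijective hs
  simpa using (id n).comp_perm (Equiv.ofBijective s hs)

lemma comp_of_injective {m n : ℕ} {s : Fin n → Fin m} (hs : Injective s) :
    DegenTranspComposite fun x : Fin m → Bool => x ∘ s := by
  induction m generalizing n with
  | zero => exact comp_of_bijective ⟨hs, fun j => j.elim0⟩
  | succ m ih =>
    by_cases hsurj : Surjective s
    · exact comp_of_bijective ⟨hs, hsurj⟩
    obtain ⟨j, hj⟩ : ∃ j, ∀ i, s i ≠ j := by simpa [Surjective] using hsurj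
    choose s' hs' using fun i => Fin.exists_succAbove_eq (hj i)
    have hs'inj : Injective s' := fun i i' h => hs (by rw [← hs' i, ← hs' i', h])
    simpa [comp_def, hs'] using codeg _ j (ih hs'inj)

lemma exists_injective_eq_comp {m n : ℕ} {f : (Fin m → Bool) → (Fin n → Bool)}
    (hf : DegenTranspComposite f) : ∃ s : Fin n → Fin m, Injective s ∧ f = fun x => x ∘ s := by
  induction hf with
  | id n => exact ⟨_root_.id, injective_id, rfl⟩
  | codeg f j _ ih =>
    obtain ⟨s, hs, rfl⟩ := ih
    exact ⟨j.succAbove ∘ s, Fin.succAbove_right_injective.comp hs, rfl⟩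
  | transp f i j _ _ ih =>
    obtain ⟨s, hs, rfl⟩ := ih
    exact ⟨Equiv.swap i j ∘ s, (Equiv.swap i j).injective.comp hs, rfl⟩

end DegenTranspComposite

/-- A map between finite Boolean lattices is a surjective lattice homomorphism
iff it is a composite of codegeneracies and principal coordinate transpositions. -/
theorem surjective_latticeHom_iff_composite (m n : ℕ)
    (φ : (Fin m → Bool) → (Fin n → Bool)) :
    (Function.Surjective φ ∧
        (∀ x y : Fin m → Bool, φ (x ⊔ y) = φ x ⊔ φ y) ∧
        (∀ x y : Fin m → Bool, φ (x ⊓ y) = φ x ⊓ φ y)) ↔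
      DegenTranspComposite φ := by
  constructor
  · rintro ⟨hsurj, hsup, hinf⟩
    obtain ⟨s, hs, hφ⟩ :=
      LatticeHom.exists_injective_coe_eq_comp_of_surjective ⟨⟨φ, hsup⟩, hinf⟩ hsurj
    rw [show φ = fun x => x ∘ s from hφ]
    exact DegenTranspComposite.comp_of_injective hs
  · intro hφ
    obtain ⟨s, hs, rfl⟩ := hφ.exists_injective_eq_comp
    exact ⟨hs.surjective_comp_right, fun _ _ => rfl, fun _ _ => rfl⟩
end

section
/- Let φ : [1]^m → [1]^n be a surjective lattice homomorphism with m > n. Then φ is not injective, and moreover there exists an index j ∈ {1,…,m} such that φ factors through the projection σ_j : [1]^m → [1]^{m-1} deleting the j-th coordinate; i.e., there is a (necessarily surjective) lattice homomorphism ψ : [1]^{m-1} → [1]^n with φ = ψ ∘ σ_j. -/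
namespace AuxLatticeHomProj

variable {M : ℕ}

/-- the atom at coordinate `j` -/
def e (j : Fin M) : Fin M → Bool := fun k => decide (k = j)

lemma e_apply_self (j : Fin M) : e j j = true := by simp [e]

lemma mono_of_inf {f : (Fin M → Bool) → Bool}
    (hinf : ∀ x y, f (x ⊓ y) = f x ⊓ f y) : Monotone f := by
  intro x y hxy
  have h : x ⊓ y = x := inf_eq_left.mpr hxy
  have := hinf x y
  rw [h] at this
  rw [this]
  exact inf_le_right

lemma f_finset_sup {f : (Fin M → Bool) → Bool}
    (hsup : ∀ x y, f (x ⊔ y) = f x ⊔ f y) (hbot : f ⊥ = false)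
    {ι : Type*} (s : Finset ι) (g : ι → Fin M → Bool) :
    f (s.sup g) = s.sup (fun i => f (g i)) := by
  induction s using Finset.cons_induction with
  | empty => simpa using hbot
  | cons a s ha ih => rw [Finset.sup_cons, Finset.sup_cons, hsup, ih]

lemma sup_univ_e : (Finset.univ.sup e : Fin M → Bool) = ⊤ := by
  funext k
  have h1 : (Finset.univ.sup e : Fin M → Bool) k = Finset.univ.sup (fun j => e j k) :=
    Finset.sup_apply _ _ _
  have h2 : e k k ≤ Finset.univ.sup (fun j => e j k) :=
    Finset.le_sup (f := fun j => e j k) (Finset.mem_univ k)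
  rw [e_apply_self] at h2
  have : Finset.univ.sup (fun j => e j k) = true := top_le_iff.mp h2
  rw [h1, this]; rfl

/-- A non-constant lattice hom on the boolean cube with values in Bool is a
coordinate projection. -/
lemma exists_coord {f : (Fin M → Bool) → Bool}
    (hsup : ∀ x y, f (x ⊔ y) = f x ⊔ f y)
    (hinf : ∀ x y, f (x ⊓ y) = f x ⊓ f y)
    (hbot : f ⊥ = false) (htop : f ⊤ = true) :
    ∃ j : Fin M, ∀ x, f x = x j := by
  have hmono := mono_of_inf hinf
  -- existence of an atom mapped to true
  have hsupu : f (Finset.univ.sup e) = Finset.univ.sup (fun j => f (e j)) :=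
    f_finset_sup hsup hbot _ _
  rw [sup_univ_e, htop] at hsupu
  have hex : ∃ j : Fin M, f (e j) = true := by
    by_contra h
    push_neg at h
    have hz : Finset.univ.sup (fun j : Fin M => f (e j)) = ⊥ := by
      apply (Finset.sup_eq_bot_iff _ _).mpr
      intro j _
      simpa using h j
    rw [hz] at hsupu
    exact absurd hsupu (by simp)
  obtain ⟨j, hj⟩ := hex
  refine ⟨j, fun x => ?_⟩
  by_cases hx : x j = true
  · have hle : e j ≤ x := by
      intro k
      by_cases hk : k = j
      · subst hk; simp [e, hx]
      · simp [e, hk]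
    have := hmono hle
    rw [hj] at this
    rw [hx]
    exact top_le_iff.mp this
  · -- x j = false
    have hxj : x j = false := Bool.eq_false_iff.mpr hx
    -- any other atom maps to false
    have hother : ∀ l : Fin M, l ≠ j → f (e l) = false := by
      intro l hl
      by_contra hcon
      have hl' : f (e l) = true := by simpa using hcon
      have hbotel : (e l ⊓ e j : Fin M → Bool) = ⊥ := by
        funext k
        by_cases hk : k = l
        · subst hk; simp [e, hl]
        · simp [e, hk]
      have := hinf (e l) (e j)
      rw [hbotel, hbot, hj, hl'] at this
      exact absurd this (by simp)
    -- x ≤ the complement of e j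
    set y : Fin M → Bool := fun k => decide (k ≠ j) with hy
    have hley : x ≤ y := by
      intro k
      by_cases hk : k = j
      · subst hk; simp [hy, hxj]
      · simp [hy, hk]
    have hyval : y = (Finset.univ.erase j).sup e := by
      funext k
      rw [Finset.sup_apply]
      by_cases hk : k = j
      · subst hk
        simp only [hy]
        have : ∀ l ∈ Finset.univ.erase k, e l k = false := by
          intro l hl
          have : l ≠ k := (Finset.mem_erase.mp hl).1
          simp [e, this.symm]
        rw [Finset.sup_congr rfl (fun l hl => this l hl)]
        have hz : (Finset.univ.erase k).sup (fun _ : Fin M => (false : Bool)) ≤ (⊥ : Bool) :=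
          Finset.sup_le fun _ _ => le_rfl
        rw [show decide (k ≠ k) = false by simp]
        exact (le_bot_iff.mp hz).symm
      · have hk' : k ∈ Finset.univ.erase j := Finset.mem_erase.mpr ⟨hk, Finset.mem_univ _⟩
        have h2 : e k k ≤ (Finset.univ.erase j).sup (fun l => e l k) := Finset.le_sup (f := fun l => e l k) hk'
        rw [e_apply_self] at h2
        have := top_le_iff.mp h2
        rw [this]
        simp [hy, hk]
    have hfy : f y = false := by
      rw [hyval, f_finset_sup hsup hbot]
      apply (Finset.sup_eq_bot_iff _ _).mpr
      intro l hl
      exact hother l (Finset.mem_erase.mp hl).1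
    have := hmono hley
    rw [hfy] at this
    rw [hxj]
    exact le_bot_iff.mp this

end AuxLatticeHomProj

/-- A surjective lattice homomorphism `[1]^{m+1} → [1]^n` with `m + 1 > n` is not
injective and factors through a codegeneracy (the projection deleting one
coordinate) followed by a surjective lattice homomorphism. -/
theorem surjective_latticeHom_factors_through_projection (m n : ℕ)
    (hmn : m + 1 > n)
    (φ : (Fin (m + 1) → Bool) → (Fin n → Bool))
    (hsurj : Function.Surjective φ)
    (hsup : ∀ x y : Fin (m + 1) → Bool, φ (x ⊔ y) = φ x ⊔ φ y)
    (hinf : ∀ x y : Fin (m + 1) → Bool, φ (x ⊓ y) = φ x ⊓ φ y) :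
    ¬ Function.Injective φ ∧
      ∃ (j : Fin (m + 1)) (ψ : (Fin m → Bool) → (Fin n → Bool)),
        Function.Surjective ψ ∧
        (∀ x y : Fin m → Bool, ψ (x ⊔ y) = ψ x ⊔ ψ y) ∧
        (∀ x y : Fin m → Bool, ψ (x ⊓ y) = ψ x ⊓ ψ y) ∧
        φ = fun x : Fin (m + 1) → Bool => ψ (x ∘ j.succAbove) := by
  classical
  have hmono : Monotone φ := by
    intro x y hxy
    have h : x ⊓ y = x := inf_eq_left.mpr hxy
    have h2 := hinf x y
    rw [h] at h2
    rw [h2]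
    exact inf_le_right
  have hbot : φ ⊥ = ⊥ := by
    obtain ⟨x, hx⟩ := hsurj ⊥
    have := hmono (bot_le : (⊥ : Fin (m+1) → Bool) ≤ x)
    rw [hx] at this
    exact le_bot_iff.mp this
  have htop : φ ⊤ = ⊤ := by
    obtain ⟨x, hx⟩ := hsurj ⊤
    have := hmono (le_top : x ≤ (⊤ : Fin (m+1) → Bool))
    rw [hx] at this
    exact top_le_iff.mp this
  have hcoord : ∀ i : Fin n, ∃ j, ∀ x, φ x i = x j := by
    intro i
    apply AuxLatticeHomProj.exists_coord (f := fun x => φ x i)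
    · intro x y
      have := congrFun (hsup x y) i
      simpa using this
    · intro x y
      have := congrFun (hinf x y) i
      simpa using this
    · have := congrFun hbot i
      simpa using this
    · have := congrFun htop i
      simpa using this
  choose g hg using hcoord
  constructor
  · intro hinj
    have hle := Fintype.card_le_of_injective φ hinj
    simp only [Fintype.card_fun, Fintype.card_fin, Fintype.card_bool] at hle
    have hlt : (2 : ℕ) ^ n < 2 ^ (m + 1) := Nat.pow_lt_pow_right one_lt_two hmn
    omega
  · have hgns : ¬ Function.Surjective g := by
      intro hs
      have := Fintype.card_le_of_surjective g hs
      simp only [Fintype.card_fin] at this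
      omega
    rw [Function.Surjective] at hgns
    push_neg at hgns
    obtain ⟨j, hj⟩ := hgns
    set ψ : (Fin m → Bool) → (Fin n → Bool) := fun y => φ (j.insertNth false y) with hψ
    have hfact : φ = fun x : Fin (m + 1) → Bool => ψ (x ∘ j.succAbove) := by
      funext x
      funext i
      simp only [hψ]
      rw [hg i, hg i]
      obtain ⟨k, hk⟩ := Fin.exists_succAbove_eq (hj i)
      rw [← hk]
      simp
    have hins : ∀ (y y' : Fin m → Bool),
        (j.insertNth false y ⊔ j.insertNth false y' : Fin (m+1) → Bool)
          = j.insertNth false (y ⊔ y') := by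
      intro y y'
      funext k
      by_cases hk : k = j
      · subst hk
        simp
      · obtain ⟨l, hl⟩ := Fin.exists_succAbove_eq (Ne.symm (Ne.intro hk)).symm
        rw [← hl]
        simp
    have hins' : ∀ (y y' : Fin m → Bool),
        (j.insertNth false y ⊓ j.insertNth false y' : Fin (m+1) → Bool)
          = j.insertNth false (y ⊓ y') := by
      intro y y'
      funext k
      by_cases hk : k = j
      · subst hk
        simp
      · obtain ⟨l, hl⟩ := Fin.exists_succAbove_eq (Ne.symm (Ne.intro hk)).symm
        rw [← hl]
        simp
    refine ⟨j, ψ, ?_, ?_, ?_, hfact⟩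
    · intro z
      obtain ⟨x, hx⟩ := hsurj z
      exact ⟨x ∘ j.succAbove, by rw [← congrFun hfact x] at *; exact hx⟩
    · intro y y'
      simp only [hψ]
      rw [← hins, hsup]
    · intro y y'
      simp only [hψ]
      rw [← hins', hinf]
end

section
/- A function φ : [1]^m → [1]^n between finite Boolean lattices is an interval-preserving lattice homomorphism if and only if it is a composite of cofaces (insertions of a constant 0 or 1 coordinate), codegeneracies (coordinate projections), and coordinate permutations. -/
/-!
A lattice homomorphism `[1]^m → [1]^n` is determined coordinatewise, and a lattice homomorphism
`[1]^m → [1]` is a constant or a projection: if it is not constant it sends `⊥` to `0` and `⊤`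
to `1`, so some atom `e_k` goes to `1`, and then `x ↦ x_k` by comparing `x` with `e_k`.
Preservation of intervals forbids two output coordinates from copying the same input coordinate,
since the interval `φ([1]^m)` contains `[φ ⊥, φ ⊤]` and hence a point on which those two
coordinates differ.
Such a map is built from the constant coordinates (cofaces on the target side) and a restriction
`x ↦ x ∘ κ` along an injection `κ`, which is codegeneracies followed by a permutation.
Conversely, each generator is a lattice homomorphism mapping boxes onto boxes.
-/

def IsIntervalSet {α : Type*} [Lattice α] (I : Set α) : Prop :=
  ∃ a b : α, a ≤ b ∧ I = Set.Icc a b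

/-- Composites of cofaces (insertions of a constant `false`/`true` coordinate),
codegeneracies (coordinate-deleting projections), and coordinate permutations
between finite Boolean lattices. -/
inductive BoxComposite :
    ∀ {m n : ℕ}, ((Fin m → Bool) → (Fin n → Bool)) → Prop
  | id (n : ℕ) : BoxComposite (id : (Fin n → Bool) → (Fin n → Bool))
  | coface {m n : ℕ} (f : (Fin (m + 1) → Bool) → (Fin n → Bool))
      (j : Fin (m + 1)) (b : Bool) :
      BoxComposite f →
      BoxComposite (fun x : Fin m → Bool => f (j.insertNth b x))
  | codeg {m n : ℕ} (f : (Fin m → Bool) → (Fin n → Bool)) (j : Fin (m + 1)) :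
      BoxComposite f →
      BoxComposite (fun x : Fin (m + 1) → Bool => f (x ∘ j.succAbove))
  | perm {m n : ℕ} (f : (Fin m → Bool) → (Fin n → Bool)) (σ : Equiv.Perm (Fin m)) :
      BoxComposite f →
      BoxComposite (fun x : Fin m → Bool => f (x ∘ σ))

open Set

namespace Fin

theorem insertNth_sup {m : ℕ} {β : Type*} [Lattice β] (j : Fin (m + 1)) (b : β)
    (x y : Fin m → β) :
    (j.insertNth b (x ⊔ y) : Fin (m + 1) → β) = j.insertNth b x ⊔ j.insertNth b y := by
  ext i
  induction i using j.succAboveCases <;> simp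

theorem insertNth_inf {m : ℕ} {β : Type*} [Lattice β] (j : Fin (m + 1)) (b : β)
    (x y : Fin m → β) :
    (j.insertNth b (x ⊓ y) : Fin (m + 1) → β) = j.insertNth b x ⊓ j.insertNth b y := by
  ext i
  induction i using j.succAboveCases <;> simp

theorem image_insertNth_Icc {m : ℕ} {β : Type*} [PartialOrder β] (j : Fin (m + 1)) (b : β)
    (a c : Fin m → β) :
    (fun x => (j.insertNth b x : Fin (m + 1) → β)) '' Icc a c =
      Icc (j.insertNth b a) (j.insertNth b c) := by
  have hrange : Icc (j.insertNth b a : Fin (m + 1) → β) (j.insertNth b c) ⊆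
      range (j.insertNth b) := fun y hy => by
    have hyj : y j = b := le_antisymm (by simpa using hy.2 j) (by simpa using hy.1 j)
    exact ⟨j.removeNth y, by rw [← hyj, Fin.insertNth_self_removeNth]⟩
  rw [← image_preimage_eq_of_subset hrange,
    Fin.preimage_insertNth_Icc_of_mem ⟨by simp, by simp⟩]
  simp

end Fin

theorem image_comp_right_Icc {ι κ β : Type*} [Preorder β] {f : κ → ι}
    (hf : Function.Injective f) {a c : ι → β} (hac : a ≤ c) :
    (fun x => x ∘ f) '' Icc a c = Icc (a ∘ f) (c ∘ f) := by
  classical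
  refine Subset.antisymm ?_ fun y hy =>
    ⟨Function.extend f y a, ⟨fun i => ?_, fun i => ?_⟩, ?_⟩
  · rintro _ ⟨x, hx, rfl⟩
    exact ⟨fun j => hx.1 _, fun j => hx.2 _⟩
  · by_cases h : ∃ j, f j = i
    · obtain ⟨j, rfl⟩ := h; simpa [hf.extend_apply] using hy.1 j
    · simp [Function.extend_apply' _ _ _ h]
  · by_cases h : ∃ j, f j = i
    · obtain ⟨j, rfl⟩ := h; simpa [hf.extend_apply] using hy.2 j
    · simpa [Function.extend_apply' _ _ _ h] using hac i
  · exact funext fun j => hf.extend_apply y a j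

def PreservesIntervals {α β : Type*} [Lattice α] [Lattice β] (φ : α → β) : Prop :=
  ∀ I : Set α, IsIntervalSet I → IsIntervalSet (φ '' I)

theorem PreservesIntervals.comp {α β γ : Type*} [Lattice α] [Lattice β] [Lattice γ]
    {f : β → γ} {g : α → β} (hf : PreservesIntervals f) (hg : PreservesIntervals g) :
    PreservesIntervals (f ∘ g) :=
  fun I hI => image_comp f g I ▸ hf _ (hg I hI)

theorem preservesIntervals_comp_right {ι κ β : Type*} [Lattice β] {f : κ → ι}
    (hf : Function.Injective f) : PreservesIntervals fun x : ι → β => x ∘ f := by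
  rintro _ ⟨a, c, hac, rfl⟩
  exact ⟨_, _, fun j => hac (f j), image_comp_right_Icc hf hac⟩

theorem preservesIntervals_insertNth {m : ℕ} {β : Type*} [Lattice β] (j : Fin (m + 1))
    (b : β) :
    PreservesIntervals fun x : Fin m → β => (j.insertNth b x : Fin (m + 1) → β) := by
  rintro _ ⟨a, c, hac, rfl⟩
  exact ⟨_, _, Fin.insertNth_le_iff.2 ⟨by simp, by simpa using hac⟩,
    Fin.image_insertNth_Icc j b a c⟩

namespace BoxComposite

variable {m n : ℕ} {φ : (Fin m → Bool) → (Fin n → Bool)}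

theorem map_sup (h : BoxComposite φ) (x y : Fin m → Bool) : φ (x ⊔ y) = φ x ⊔ φ y := by
  induction h with
  | id => rfl
  | coface f j b _ ih =>
    show f _ = f _ ⊔ f _
    rw [← ih, Fin.insertNth_sup]
  | codeg f j _ ih => exact ih _ _
  | perm f σ _ ih => exact ih _ _

theorem map_inf (h : BoxComposite φ) (x y : Fin m → Bool) : φ (x ⊓ y) = φ x ⊓ φ y := by
  induction h with
  | id => rfl
  | coface f j b _ ih =>
    show f _ = f _ ⊓ f _
    rw [← ih, Fin.insertNth_inf]
  | codeg f j _ ih => exact ih _ _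
  | perm f σ _ ih => exact ih _ _

theorem preservesIntervals (h : BoxComposite φ) : PreservesIntervals φ := by
  induction h with
  | id => exact fun I hI => (image_id I).symm ▸ hI
  | coface f j b _ ih => exact ih.comp (preservesIntervals_insertNth j b)
  | codeg f j _ ih => exact ih.comp (preservesIntervals_comp_right j.succAbove_right_injective)
  | perm f σ _ ih => exact ih.comp (preservesIntervals_comp_right σ.injective)

theorem comp {l m n : ℕ} {f : (Fin m → Bool) → (Fin n → Bool)}
    {g : (Fin l → Bool) → (Fin m → Bool)} (hf : BoxComposite f) (hg : BoxComposite g) :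
    BoxComposite (f ∘ g) := by
  induction hg with
  | id => exact hf
  | coface g j b _ ih => exact .coface (f ∘ g) j b (ih hf)
  | codeg g j _ ih => exact .codeg (f ∘ g) j (ih hf)
  | perm g σ _ ih => exact .perm (f ∘ g) σ (ih hf)

theorem insertNth {m : ℕ} (j : Fin (m + 1)) (b : Bool) :
    BoxComposite (fun x : Fin m → Bool => j.insertNth b x) :=
  .coface _root_.id j b (.id _)

theorem comp_right_of_bijective {m p : ℕ} {κ : Fin p → Fin m}
    (hκ : Function.Bijective κ) : BoxComposite (fun x : Fin m → Bool => x ∘ κ) := by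
  obtain rfl : p = m := by simpa using Fintype.card_of_bijective hκ
  exact .perm _root_.id (Equiv.ofBijective κ hκ) (.id p)

theorem comp_right_of_injective {m p : ℕ} {κ : Fin p → Fin m}
    (hκ : Function.Injective κ) : BoxComposite (fun x : Fin m → Bool => x ∘ κ) := by
  induction m generalizing p with
  | zero => exact comp_right_of_bijective ⟨hκ, fun k => k.elim0⟩
  | succ m ih =>
    by_cases hsurj : Function.Surjective κ
    · exact comp_right_of_bijective ⟨hκ, hsurj⟩
    obtain ⟨k, hk⟩ := not_forall.1 hsurj
    choose κ' hκ' using fun j => Fin.exists_succAbove_eq fun h => hk ⟨j, h⟩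
    have hfac : κ = k.succAbove ∘ κ' := funext fun j => (hκ' j).symm
    subst hfac
    exact .codeg _ k (ih hκ.of_comp)

end BoxComposite

theorem isIntervalSet_univ {α : Type*} [Lattice α] [BoundedOrder α] :
    IsIntervalSet (univ : Set α) :=
  ⟨⊥, ⊤, bot_le, Icc_bot_top.symm⟩

theorem exists_eq_const_or_eq_eval_of_map_sup_of_map_inf {ι : Type*} [Fintype ι]
    {f : (ι → Bool) → Bool} (hsup : ∀ x y, f (x ⊔ y) = f x ⊔ f y)
    (hinf : ∀ x y, f (x ⊓ y) = f x ⊓ f y) :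
    (∃ b, ∀ x, f x = b) ∨ ∃ k, ∀ x, f x = x k := by
  classical
  have hmono : Monotone f := fun x y hxy => by
    rw [← sup_eq_right.2 hxy, hsup]; exact le_sup_left
  by_cases hconst : f ⊥ = f ⊤
  · exact .inl ⟨f ⊥, fun x => le_antisymm (hconst ▸ hmono le_top) (hmono bot_le)⟩
  have hbot : f ⊥ = ⊥ := by
    simpa using ne_top_of_lt ((hmono (bot_le : (⊥ : ι → Bool) ≤ ⊤)).lt_of_ne hconst)
  obtain ⟨k, hk⟩ : ∃ k, f (fun j => decide (j = k)) = true := by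
    by_contra! h
    have hunit : Finset.univ.sup (fun k j => decide (j = k)) = (⊤ : ι → Bool) :=
      top_unique fun j => by
        simpa using Finset.le_sup (f := fun k j => decide (j = k)) (Finset.mem_univ j) j
    apply hconst
    rw [hbot, ← hunit, Finset.apply_sup_eq_sup_comp f hsup hbot, eq_comm,
      Finset.sup_eq_bot_iff]
    exact fun k _ => by simpa using h k
  refine .inr ⟨k, fun x => ?_⟩
  cases hxk : x k
  · have hdisj : x ⊓ (fun j => decide (j = k)) = ⊥ := by
      ext j; by_cases hj : j = k <;> simp_all
    have := hinf x fun j => decide (j = k)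
    rw [hdisj, hbot, hk] at this
    simpa using this.symm
  · have hle : (fun j => decide (j = k)) ≤ x := by
      intro j; by_cases hj : j = k <;> simp_all
    exact top_unique (hk ▸ hmono hle : true ≤ f x)

theorem eq_of_isIntervalSet_range_of_apply_eq_eval {ι κ : Type*}
    {φ : (ι → Bool) → (κ → Bool)} (hφ : IsIntervalSet (range φ)) {i i' : κ} {k : ι}
    (hi : ∀ x, φ x i = x k) (hi' : ∀ x, φ x i' = x k) : i = i' := by
  classical
  obtain ⟨a, c, -, hac⟩ := hφ
  have hbot : φ ⊥ ∈ Icc a c := hac ▸ mem_range_self ⊥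
  have htop : φ ⊤ ∈ Icc a c := hac ▸ mem_range_self ⊤
  by_contra hne
  have hmem : Function.update (φ ⊤) i false ∈ Icc a c := by
    refine ⟨le_update_iff.2 ⟨?_, fun j _ => htop.1 j⟩,
      update_le_iff.2 ⟨Bool.false_le _, fun j _ => htop.2 j⟩⟩
    simpa [hi] using hbot.1 i
  obtain ⟨x, hx⟩ := hac ▸ hmem
  have h1 := congrFun hx i
  have h2 := congrFun hx i'
  simp [hi, hi', Function.update_of_ne (Ne.symm hne)] at h1 h2
  simp [h1] at h2

theorem boxComposite_of_forall_eq_eval {m n : ℕ} {φ : (Fin m → Bool) → (Fin n → Bool)}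
    (hφ : ∀ i, ∃ k, ∀ x, φ x i = x k)
    (hinj : ∀ i i' k, (∀ x, φ x i = x k) → (∀ x, φ x i' = x k) → i = i') :
    BoxComposite φ := by
  choose κ hκ using hφ
  obtain rfl : φ = fun x => x ∘ κ := funext fun x => funext (hκ · x)
  exact .comp_right_of_injective fun i i' h => hinj i i' (κ i) (hκ i) (h ▸ hκ i')

theorem boxComposite_of_forall_eq_const_or_eq_eval {m n : ℕ}
    {φ : (Fin m → Bool) → (Fin n → Bool)}
    (hφ : ∀ i, (∃ b, ∀ x, φ x i = b) ∨ ∃ k, ∀ x, φ x i = x k)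
    (hinj : ∀ i i' k, (∀ x, φ x i = x k) → (∀ x, φ x i' = x k) → i = i') :
    BoxComposite φ := by
  induction n with
  | zero => exact boxComposite_of_forall_eq_eval (fun i => i.elim0) hinj
  | succ n ih =>
    by_cases hconst : ∃ i b, ∀ x, φ x i = b
    · obtain ⟨i, b, hb⟩ := hconst
      have hfac : φ = (fun y => i.insertNth b y) ∘ fun x => i.removeNth (φ x) :=
        funext fun x => by simp [← hb x]
      rw [hfac]
      exact (BoxComposite.insertNth i b).comp <| ih (fun j => hφ (i.succAbove j))
        fun j j' k hj hj' => i.succAbove_right_injective (hinj _ _ k hj hj')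
    · exact boxComposite_of_forall_eq_eval
        (fun i => (hφ i).resolve_left fun hb => hconst ⟨i, hb⟩) hinj

/-- A map between finite Boolean lattices is an interval-preserving lattice
homomorphism iff it is a composite of cofaces, codegeneracies, and coordinate
permutations. -/
theorem intervalPreserving_latticeHom_iff_boxComposite (m n : ℕ)
    (φ : (Fin m → Bool) → (Fin n → Bool)) :
    ((∀ x y : Fin m → Bool, φ (x ⊔ y) = φ x ⊔ φ y) ∧
        (∀ x y : Fin m → Bool, φ (x ⊓ y) = φ x ⊓ φ y) ∧
        (∀ I : Set (Fin m → Bool), IsIntervalSet I → IsIntervalSet (φ '' I))) ↔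
      BoxComposite φ := by
  refine ⟨fun ⟨hsup, hinf, hint⟩ => ?_,
    fun h => ⟨h.map_sup, h.map_inf, h.preservesIntervals⟩⟩
  have hrange : IsIntervalSet (range φ) := image_univ ▸ hint univ isIntervalSet_univ
  exact boxComposite_of_forall_eq_const_or_eq_eval
    (fun i => exists_eq_const_or_eq_eval_of_map_sup_of_map_inf
      (fun x y => congrFun (hsup x y) i) (fun x y => congrFun (hinf x y) i))
    (fun i i' _ hi hi' => eq_of_isIntervalSet_range_of_apply_eq_eval hrange hi hi')
end

section
/- Let L be a finite distributive lattice and let I, J be Boolean intervals in L (intervals that are isomorphic to Boolean lattices). Then the set I ∨ J = { i ∨ j : i ∈ I, j ∈ J } is again a Boolean interval in L, and dually I ∧ J = { i ∧ j : i ∈ I, j ∈ J } is a Boolean interval in L. -/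
/-!
In a distributive lattice, a finite interval `[a, b]` is Boolean exactly when every element of it
has a complement relative to `[a, b]` (a finite Boolean algebra is the power set of its atoms). Given `a ≤ b` and `c ≤ d`, every `x ∈ [a ⊔ c, b ⊔ d]` splits
as `x = i ⊔ j` with `i = (x ⊓ b) ⊔ a ∈ [a, b]` and `j = (x ⊓ d) ⊔ c ∈ [c, d]`. This shows that the
pointwise join of the two intervals is `[a ⊔ c, b ⊔ d]`, and, if `i'`, `j'` are relative complements
of `i`, `j`, then `i' ⊔ j'` is a relative complement of `x`. The statement about meets is the
statement about joins in the order dual.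
-/

/-- The interval `Set.Icc a b` is a Boolean interval: it is nonempty (i.e. `a ≤ b`)
and, as a lattice, isomorphic to a finite Boolean lattice `[1]^k`. -/
def IsBooleanIcc {L : Type*} [Lattice L] (a b : L) : Prop :=
  a ≤ b ∧ ∃ k : ℕ, Nonempty (Set.Icc a b ≃o (Fin k → Bool))

open Set OrderDual

theorem BooleanAlgebra.exists_orderIso_fin_arrow_bool (B : Type*) [BooleanAlgebra B] [Finite B] :
    ∃ k : ℕ, Nonempty (B ≃o (Fin k → Bool)) := by
  classical
  have := Fintype.ofFinite B
  let _ := Fintype.toCompleteAtomicBooleanAlgebra B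
  let σ := Finite.equivFin {a : B // IsAtom a}
  refine ⟨_, ⟨CompleteAtomicBooleanAlgebra.toSetOfIsAtom.trans
    { toEquiv := σ.arrowCongr Equiv.propEquivBool, map_rel_iff' := ?_ }⟩⟩
  intro s t
  change (∀ i, decide (σ.symm i ∈ s) ≤ decide (σ.symm i ∈ t)) ↔ s ⊆ t
  simp [σ.symm.forall_congr_left, Set.subset_def, Bool.le_iff_imp]

section Lattice

variable {L : Type*} [Lattice L]

def IccComplemented (a b : L) : Prop :=
  ∀ x ∈ Icc a b, ∃ y ∈ Icc a b, x ⊓ y = a ∧ x ⊔ y = b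

variable {a b : L}

theorem iccComplemented_iff_complementedLattice [Fact (a ≤ b)] :
    IccComplemented a b ↔ ComplementedLattice (Icc a b) := by
  simp only [IccComplemented, complementedLattice_iff, Icc.isCompl_iff, Subtype.forall,
    Subtype.exists, exists_prop]

theorem iccComplemented_toDual_iff :
    IccComplemented (toDual b) (toDual a) ↔ IccComplemented a b := by
  simp only [IccComplemented, OrderDual.forall, OrderDual.exists, mem_Icc, toDual_le_toDual,
    ← toDual_inf, ← toDual_sup, toDual_inj, and_comm]

theorem IsBooleanIcc.iccComplemented (h : IsBooleanIcc a b) : IccComplemented a b := by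
  obtain ⟨hab, k, ⟨e⟩⟩ := h
  have : Fact (a ≤ b) := ⟨hab⟩
  exact iccComplemented_iff_complementedLattice.2 e.symm.complementedLattice

end Lattice

theorem IccComplemented.isBooleanIcc {L : Type*} [DistribLattice L] [Finite L] {a b : L} (hab : a ≤ b)
    (h : IccComplemented a b) : IsBooleanIcc a b := by
  have : Fact (a ≤ b) := ⟨hab⟩
  have := iccComplemented_iff_complementedLattice.1 h
  let _ : DistribLattice (Icc a b) := .ofInfSupLe fun x y z ↦ (inf_sup_left (x : L) y z).le
  let _ := DistribLattice.booleanAlgebraOfComplemented (Icc a b)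
  exact ⟨hab, BooleanAlgebra.exists_orderIso_fin_arrow_bool _⟩

section DistribLattice

variable {L : Type*} [DistribLattice L] {a b c d x : L}

theorem exists_sup_eq_of_mem_Icc_sup (hab : a ≤ b) (hcd : c ≤ d) (hx : x ∈ Icc (a ⊔ c) (b ⊔ d)) :
    ∃ i ∈ Icc a b, ∃ j ∈ Icc c d, i ⊔ j = x ∧ x ⊓ b ≤ i ∧ x ⊓ d ≤ j := by
  refine ⟨x ⊓ b ⊔ a, ⟨le_sup_right, sup_le inf_le_right hab⟩,
    x ⊓ d ⊔ c, ⟨le_sup_right, sup_le inf_le_right hcd⟩, ?_, le_sup_left, le_sup_left⟩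
  rw [sup_sup_sup_comm, ← inf_sup_left, inf_eq_left.2 hx.2, sup_eq_left.2 hx.1]

theorem image2_sup_Icc (hab : a ≤ b) (hcd : c ≤ d) :
    image2 (· ⊔ ·) (Icc a b) (Icc c d) = Icc (a ⊔ c) (b ⊔ d) := by
  refine Subset.antisymm ?_ fun x hx ↦ ?_
  · rintro _ ⟨i, hi, j, hj, rfl⟩
    exact ⟨sup_le_sup hi.1 hj.1, sup_le_sup hi.2 hj.2⟩
  · obtain ⟨i, hi, j, hj, rfl, -⟩ := exists_sup_eq_of_mem_Icc_sup hab hcd hx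
    exact mem_image2_of_mem hi hj

theorem image2_inf_Icc (hab : a ≤ b) (hcd : c ≤ d) :
    image2 (· ⊓ ·) (Icc a b) (Icc c d) = Icc (a ⊓ c) (b ⊓ d) := by
  have h := image2_sup_Icc (a := toDual b) (b := toDual a) (c := toDual d) (d := toDual c) hab hcd
  rw [Icc_toDual, Icc_toDual, ← toDual_inf, ← toDual_inf, Icc_toDual] at h
  exact h

theorem IccComplemented.sup (hab : a ≤ b) (hcd : c ≤ d) (hI : IccComplemented a b)
    (hJ : IccComplemented c d) : IccComplemented (a ⊔ c) (b ⊔ d) := by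
  intro x hx
  obtain ⟨i, hi, j, hj, hij, hxb, hxd⟩ := exists_sup_eq_of_mem_Icc_sup hab hcd hx
  obtain ⟨i', hi', hi_inf, hi_sup⟩ := hI i hi
  obtain ⟨j', hj', hj_inf, hj_sup⟩ := hJ j hj
  -- `x ⊓ v ≤ x ⊓ q ≤ u`, so `x ⊓ v ≤ u ⊓ v = p`.
  have inf_eq {p q u v : L} (hxq : x ⊓ q ≤ u) (hv : v ∈ Icc p q) (huv : u ⊓ v = p)
      (hpx : p ≤ x) : x ⊓ v = p :=
    le_antisymm (huv ▸ le_inf ((inf_le_inf_left x hv.2).trans hxq) inf_le_right) (le_inf hpx hv.1)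
  refine ⟨i' ⊔ j', ⟨sup_le_sup hi'.1 hj'.1, sup_le_sup hi'.2 hj'.2⟩, ?_, ?_⟩
  · rw [inf_sup_left, inf_eq hxb hi' hi_inf (hi.1.trans (hij ▸ le_sup_left)),
      inf_eq hxd hj' hj_inf (hj.1.trans (hij ▸ le_sup_right))]
  · rw [← hij, sup_sup_sup_comm, hi_sup, hj_sup]

theorem IccComplemented.inf (hab : a ≤ b) (hcd : c ≤ d) (hI : IccComplemented a b)
    (hJ : IccComplemented c d) : IccComplemented (a ⊓ c) (b ⊓ d) :=
  iccComplemented_toDual_iff.1 <| (iccComplemented_toDual_iff.2 hI).sup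
    (toDual_le_toDual.2 hab) (toDual_le_toDual.2 hcd) (iccComplemented_toDual_iff.2 hJ)

end DistribLattice

/-- In a finite distributive lattice, the pointwise join and the pointwise meet of
two Boolean intervals are again Boolean intervals. -/
theorem booleanIcc_sup_inf (L : Type*) [DistribLattice L] [Fintype L]
    (a b c d : L) (hI : IsBooleanIcc a b) (hJ : IsBooleanIcc c d) :
    (∃ p q : L, Set.image2 (· ⊔ ·) (Set.Icc a b) (Set.Icc c d) = Set.Icc p q ∧
        IsBooleanIcc p q) ∧
    (∃ p q : L, Set.image2 (· ⊓ ·) (Set.Icc a b) (Set.Icc c d) = Set.Icc p q ∧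
        IsBooleanIcc p q) := by
  have hab := hI.1
  have hcd := hJ.1
  exact ⟨⟨a ⊔ c, b ⊔ d, image2_sup_Icc hab hcd,
      (hI.iccComplemented.sup hab hcd hJ.iccComplemented).isBooleanIcc (sup_le_sup hab hcd)⟩,
    ⟨a ⊓ c, b ⊓ d, image2_inf_Icc hab hcd,
      (hI.iccComplemented.inf hab hcd hJ.iccComplemented).isBooleanIcc (inf_le_inf hab hcd)⟩⟩
end

section
/- Every finite distributive lattice L is the colimit, in the category of small categories, of the diagram of its Boolean intervals and inclusions between them. Concretely: for any two elements x ≤ y in L and any two composites of covering relations from x to y, the induced morphisms x → y in the colimit category agree, so the colimit is a poset isomorphic to L. -/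
/-!
A functor out of a finite poset is determined by its values on covering relations, so the glued
functor has to send `x ≤ y` to the composite along a maximal chain from `x` to `y`. This does not
depend on the chain: two distinct covers `w`, `y` of `x` satisfy `w ⊓ y = x`, so by distributivity
`[x, w ⊔ y] ≅ [x, w] × [x, y]` is a Boolean square, on which the cocone already makes both paths
agree; downward induction on `x` does the rest. Functoriality, agreement with the cocone on each
Boolean interval and uniqueness follow by the same induction.
-/

open CategoryTheory Set

section BooleanInterval

variable {L : Type*}

abbrev IsBooleanInterval [Preorder L] (a b : L) : Prop :=
  ∃ k : ℕ, Nonempty (Icc a b ≃o (Fin k → Bool))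

theorem isBooleanInterval_self [PartialOrder L] (a : L) : IsBooleanInterval a a :=
  ⟨0, ⟨OrderIso.ofUnique _ _⟩⟩

noncomputable def CovBy.iccOrderIsoBool [PartialOrder L] {a b : L} (h : a ⋖ b) :
    Icc a b ≃o Bool :=
  (StrictMono.orderIsoOfSurjective
    (fun t : Bool => if t then (⟨b, h.le, le_rfl⟩ : Icc a b) else ⟨a, le_rfl, h.le⟩)
    (fun s t hst => by
      obtain ⟨rfl, rfl⟩ := Bool.lt_iff.mp hst
      exact h.lt)
    (fun x => by
      rcases h.wcovBy.eq_or_eq x.2.1 x.2.2 with hx | hx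
      · exact ⟨false, Subtype.ext hx.symm⟩
      · exact ⟨true, Subtype.ext hx.symm⟩)).symm

theorem CovBy.isBooleanInterval [PartialOrder L] {a b : L} (h : a ⋖ b) :
    IsBooleanInterval a b :=
  ⟨1, ⟨h.iccOrderIsoBool.trans (OrderIso.funUnique (Fin 1) Bool).symm⟩⟩

theorem WCovBy.isBooleanInterval [PartialOrder L] {a b : L} (h : a ⩿ b) :
    IsBooleanInterval a b := by
  rcases h.eq_or_covBy with rfl | h
  · exact isBooleanInterval_self a
  · exact h.isBooleanInterval

theorem CovBy.inf_eq_of_ne [Lattice L] {x a b : L} (ha : x ⋖ a) (hb : x ⋖ b) (hab : a ≠ b) :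
    a ⊓ b = x := by
  refine (ha.wcovBy.eq_or_eq (le_inf ha.le hb.le) inf_le_left).resolve_right fun h => ?_
  have hle : a ≤ b := h ▸ inf_le_right
  rcases hb.wcovBy.eq_or_eq ha.le hle with h' | h'
  · exact ha.ne h'.symm
  · exact hab h'

noncomputable def iccInfSupOrderIsoProd [DistribLattice L] (a b : L) :
    Icc (a ⊓ b) (a ⊔ b) ≃o Icc (a ⊓ b) a × Icc (a ⊓ b) b where
  toFun t := (⟨t ⊓ a, le_inf t.2.1 inf_le_left, inf_le_right⟩,
    ⟨t ⊓ b, le_inf t.2.1 inf_le_right, inf_le_right⟩)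
  invFun p := ⟨p.1 ⊔ p.2, p.1.2.1.trans le_sup_left, sup_le_sup p.1.2.2 p.2.2.2⟩
  left_inv t := Subtype.ext <| by
    simp only [← inf_sup_left, inf_eq_left.mpr t.2.2]
  right_inv p := by
    obtain ⟨⟨p, hp, hpa⟩, ⟨q, hq, hqb⟩⟩ := p
    ext
    · change (p ⊔ q) ⊓ a = p
      rw [inf_sup_right, inf_eq_left.mpr hpa, sup_eq_left]
      exact (inf_le_inf_right a hqb).trans (inf_comm b a ▸ hp)
    · change (p ⊔ q) ⊓ b = q
      rw [inf_sup_right, inf_eq_left.mpr hqb, sup_eq_right]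
      exact (inf_le_inf_right b hpa).trans hq
  map_rel_iff' {s t} := by
    refine ⟨fun h => ?_, fun h => ⟨inf_le_inf_right a h, inf_le_inf_right b h⟩⟩
    change (s : L) ≤ t
    calc (s : L) = (s : L) ⊓ a ⊔ (s : L) ⊓ b := by rw [← inf_sup_left, inf_eq_left.mpr s.2.2]
      _ ≤ (t : L) ⊓ a ⊔ (t : L) ⊓ b := sup_le_sup h.1 h.2
      _ ≤ t := sup_le inf_le_left inf_le_left

def OrderIso.prodCongr {α β γ δ : Type*} [Preorder α] [Preorder β] [Preorder γ] [Preorder δ]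
    (e₁ : α ≃o β) (e₂ : γ ≃o δ) : α × γ ≃o β × δ where
  toEquiv := e₁.toEquiv.prodCongr e₂.toEquiv
  map_rel_iff' := by simp [Prod.le_def]

theorem isBooleanInterval_inf_sup [DistribLattice L] {a b : L} (ha : a ⊓ b ⋖ a)
    (hb : a ⊓ b ⋖ b) : IsBooleanInterval (a ⊓ b) (a ⊔ b) :=
  ⟨2, ⟨(iccInfSupOrderIsoProd a b).trans <| (ha.iccOrderIsoBool.prodCongr hb.iccOrderIsoBool).trans
    (OrderIso.piFinTwoIso fun _ => Bool).symm⟩⟩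

end BooleanInterval

abbrev iccInclusion {P : Type*} [Preorder P] (a b : P) : Icc a b ⥤ P :=
  (Subtype.mono_coe (· ∈ Icc a b)).functor

theorem CategoryTheory.Functor.ext_of_covBy {P : Type*} [PartialOrder P] [Finite P]
    {C : Type*} [Category C] {G₁ G₂ : P ⥤ C} (h_obj : ∀ x, G₁.obj x = G₂.obj x)
    (h_map : ∀ x y (h : x ⋖ y), G₁.map (homOfLE h.le) =
      eqToHom (h_obj x) ≫ G₂.map (homOfLE h.le) ≫ eqToHom (h_obj y).symm) :
    G₁ = G₂ := by
  suffices ∀ x y (h : x ≤ y), G₁.map (homOfLE h) =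
      eqToHom (h_obj x) ≫ G₂.map (homOfLE h) ≫ eqToHom (h_obj y).symm from
    Functor.ext h_obj fun x y f => this x y (leOfHom f)
  intro x y h
  induction x using WellFoundedGT.induction with
  | _ x ih =>
    rcases h.eq_or_lt with rfl | hlt
    · simp
    · obtain ⟨z, hxz, hzy⟩ := exists_covBy_le_of_lt hlt
      rw [← homOfLE_comp hxz.le hzy, G₁.map_comp, G₂.map_comp, h_map x z hxz,
        ih z hxz.lt hzy]
      simp

theorem CategoryTheory.Functor.ext_of_restrict_wcovBy {P : Type*} [PartialOrder P] [Finite P]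
    {C : Type*} [Category C] {G₁ G₂ : P ⥤ C}
    (h : ∀ a b, a ⩿ b → iccInclusion a b ⋙ G₁ = iccInclusion a b ⋙ G₂) : G₁ = G₂ :=
  Functor.ext_of_covBy (fun x => Functor.congr_obj (h x x (WCovBy.refl x)) default) fun x y hxy =>
    Functor.congr_hom (h x y hxy.wcovBy)
      (homOfLE (show (⟨x, le_rfl, hxy.le⟩ : Icc x y) ≤ ⟨y, hxy.le, le_rfl⟩ from hxy.le))

structure BooleanIntervalCocone (L : Type*) [Preorder L] (C : Type*) [Category C] where
  functor (a b : L) : a ≤ b → IsBooleanInterval a b → Icc a b ⥤ C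
  inclusion_comp_functor (a b c d : L) (hab : a ≤ b) (hcd : c ≤ d) (hB : IsBooleanInterval a b)
    (hB' : IsBooleanInterval c d) (hca : c ≤ a) (hbd : b ≤ d) :
    (show Monotone (inclusion (Icc_subset_Icc hca hbd)) from fun _ _ h => h).functor ⋙
      functor c d hcd hB' = functor a b hab hB

namespace BooleanIntervalCocone

variable {L C : Type*} [Category C]

section PartialOrder

variable [PartialOrder L] (S : BooleanIntervalCocone L C)

def obj (x : L) : C :=
  (S.functor x x le_rfl (isBooleanInterval_self x)).obj default

theorem obj_eq {a b : L} (hab : a ≤ b) (hB : IsBooleanInterval a b) {x : L} (hx : x ∈ Icc a b) :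
    S.obj x = (S.functor a b hab hB).obj ⟨x, hx⟩ :=
  (Functor.congr_obj (S.inclusion_comp_functor x x a b le_rfl hab _ hB hx.1 hx.2) default).symm

def intervalHom {a b : L} (hab : a ≤ b) (hB : IsBooleanInterval a b) {x y : L}
    (hx : x ∈ Icc a b) (hy : y ∈ Icc a b) (h : x ≤ y) : S.obj x ⟶ S.obj y :=
  eqToHom (S.obj_eq hab hB hx) ≫
    (S.functor a b hab hB).map (homOfLE (show (⟨x, hx⟩ : Icc a b) ≤ ⟨y, hy⟩ from h)) ≫
    eqToHom (S.obj_eq hab hB hy).symm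

theorem intervalHom_comp {a b : L} (hab : a ≤ b) (hB : IsBooleanInterval a b) {x y z : L}
    (hx : x ∈ Icc a b) (hy : y ∈ Icc a b) (hz : z ∈ Icc a b) (hxy : x ≤ y) (hyz : y ≤ z) :
    S.intervalHom hab hB hx hy hxy ≫ S.intervalHom hab hB hy hz hyz =
      S.intervalHom hab hB hx hz (hxy.trans hyz) := by
  simp [intervalHom, ← Functor.map_comp_assoc]

theorem intervalHom_eq_of_le {a b a' b' : L} (hab : a ≤ b) (hB : IsBooleanInterval a b)
    (hab' : a' ≤ b') (hB' : IsBooleanInterval a' b') (ha : a' ≤ a) (hb : b ≤ b')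
    {x y : L} (hx : x ∈ Icc a b) (hy : y ∈ Icc a b) (h : x ≤ y) :
    S.intervalHom hab hB hx hy h =
      S.intervalHom hab' hB' (Icc_subset_Icc ha hb hx) (Icc_subset_Icc ha hb hy) h := by
  rw [intervalHom,
    Functor.congr_hom (S.inclusion_comp_functor a b a' b' hab hab' hB hB' ha hb).symm]
  simp only [intervalHom, Functor.comp_map, Category.assoc]
  erw [eqToHom_trans_assoc, eqToHom_trans]
  rfl

def coverHom {x y : L} (h : x ⋖ y) : S.obj x ⟶ S.obj y :=
  S.intervalHom h.le h.isBooleanInterval (left_mem_Icc.2 h.le) (right_mem_Icc.2 h.le) h.le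

theorem coverHom_comp_coverHom {x y z : L} (hxy : x ⋖ y) (hyz : y ⋖ z)
    (hB : IsBooleanInterval x z) :
    S.coverHom hxy ≫ S.coverHom hyz =
      S.intervalHom (hxy.le.trans hyz.le) hB (left_mem_Icc.2 (hxy.le.trans hyz.le))
        (right_mem_Icc.2 (hxy.le.trans hyz.le)) (hxy.le.trans hyz.le) := by
  have hxz := hxy.le.trans hyz.le
  rw [coverHom, coverHom, S.intervalHom_eq_of_le _ _ hxz hB le_rfl hyz.le,
    S.intervalHom_eq_of_le _ _ hxz hB hxy.le le_rfl, intervalHom_comp]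

variable [Finite L]

-- The composite along some maximal chain; by `hom_eq_coverHom_comp` every chain gives the same one.
open scoped Classical in
noncomputable def hom (x y : L) (h : x ≤ y) : S.obj x ⟶ S.obj y :=
  if hxy : x = y then eqToHom (congrArg S.obj hxy)
  else
    have hz := (exists_covBy_le_of_lt (h.lt_of_ne hxy)).choose_spec
    S.coverHom hz.1 ≫ hom _ y hz.2
termination_by (Icc x y).ncard
decreasing_by exact ncard_lt_ncard (Icc_ssubset_Icc_left h hz.1.lt le_rfl)

theorem hom_self (x : L) : S.hom x x le_rfl = 𝟙 (S.obj x) := by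
  rw [hom, dif_pos rfl, eqToHom_refl]

theorem exists_hom_eq_coverHom_comp {x y : L} (h : x < y) :
    ∃ z, ∃ (hxz : x ⋖ z) (hzy : z ≤ y), S.hom x y h.le = S.coverHom hxz ≫ S.hom z y hzy := by
  rw [hom, dif_neg h.ne]
  exact ⟨_, _, _, rfl⟩

end PartialOrder

section DistribLattice

variable [DistribLattice L] (S : BooleanIntervalCocone L C)

theorem coverHom_square {a b : L}
    (ha : a ⊓ b ⋖ a) (hb : a ⊓ b ⋖ b) :
    S.coverHom ha ≫ S.coverHom (covBy_sup_of_inf_covBy_right hb) =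
      S.coverHom hb ≫ S.coverHom (covBy_sup_of_inf_covBy_left ha) := by
  rw [S.coverHom_comp_coverHom _ _ (isBooleanInterval_inf_sup ha hb),
    S.coverHom_comp_coverHom _ _ (isBooleanInterval_inf_sup ha hb)]

variable [Finite L]

theorem hom_eq_coverHom_comp {x y z : L} (hxy : x ⋖ y) (hyz : y ≤ z) :
    S.hom x z (hxy.le.trans hyz) = S.coverHom hxy ≫ S.hom y z hyz := by
  induction x using WellFoundedGT.induction generalizing y with
  | _ x ih =>
    obtain ⟨w, hxw, hwz, hw⟩ := S.exists_hom_eq_coverHom_comp (hxy.lt.trans_le hyz)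
    rw [hw]
    rcases eq_or_ne w y with rfl | hwy
    · rfl
    obtain rfl : w ⊓ y = x := hxw.inf_eq_of_ne hxy hwy
    rw [ih w hxw.lt (covBy_sup_of_inf_covBy_right hxy) (sup_le hwz hyz),
      ih y hxy.lt (covBy_sup_of_inf_covBy_left hxw) (sup_le hwz hyz),
      ← Category.assoc, ← Category.assoc, S.coverHom_square]

theorem hom_comp {x y z : L} (hxy : x ≤ y) (hyz : y ≤ z) :
    S.hom x y hxy ≫ S.hom y z hyz = S.hom x z (hxy.trans hyz) := by
  induction x using WellFoundedGT.induction with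
  | _ x ih =>
    rcases hxy.eq_or_lt with rfl | hlt
    · rw [hom_self, Category.id_comp]
    obtain ⟨w, hxw, hwy, hw⟩ := S.exists_hom_eq_coverHom_comp hlt
    rw [hw, S.hom_eq_coverHom_comp hxw (hwy.trans hyz), Category.assoc, ih w hxw.lt hwy]

theorem hom_eq_intervalHom {a b : L} (hab : a ≤ b) (hB : IsBooleanInterval a b) {x y : L}
    (hx : x ∈ Icc a b) (hy : y ∈ Icc a b) (h : x ≤ y) :
    S.hom x y h = S.intervalHom hab hB hx hy h := by
  induction x using WellFoundedGT.induction with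
  | _ x ih =>
    rcases h.eq_or_lt with rfl | hlt
    · simp [hom_self, intervalHom]
    obtain ⟨w, hxw, hwy, hw⟩ := S.exists_hom_eq_coverHom_comp hlt
    have hw_mem : w ∈ Icc a b := ⟨hx.1.trans hxw.le, hwy.trans hy.2⟩
    rw [hw, ih w hxw.lt hw_mem hwy, coverHom,
      S.intervalHom_eq_of_le _ _ hab hB hx.1 hw_mem.2, intervalHom_comp]

noncomputable def desc : L ⥤ C where
  obj := S.obj
  map f := S.hom _ _ (leOfHom f)
  map_id x := S.hom_self x
  map_comp f g := (S.hom_comp (leOfHom f) (leOfHom g)).symm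

theorem restrict_desc (a b : L) (hab : a ≤ b) (hB : IsBooleanInterval a b) :
    iccInclusion a b ⋙ S.desc = S.functor a b hab hB :=
  CategoryTheory.Functor.ext (fun x => S.obj_eq hab hB x.2) fun x y f =>
    S.hom_eq_intervalHom hab hB x.2 y.2 (leOfHom f)

theorem desc_unique (G : L ⥤ C)
    (hG : ∀ a b (hab : a ≤ b) (hB : IsBooleanInterval a b),
      iccInclusion a b ⋙ G = S.functor a b hab hB) :
    G = S.desc :=
  Functor.ext_of_restrict_wcovBy fun a b h =>
    (hG a b h.le h.isBooleanInterval).trans (S.restrict_desc a b h.le h.isBooleanInterval).symm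

end DistribLattice

end BooleanIntervalCocone

/-- A finite distributive lattice `L` is the colimit, in the category of small
categories, of the diagram of its Boolean intervals and inclusions: every
cocone of functors on the Boolean intervals of `L`, compatible with inclusions,
factors uniquely through a functor on `L` itself. -/
theorem finite_distributive_lattice_colimit_of_boolean_intervals
    (L : Type) [Fintype L] [DistribLattice L]
    (C : Type*) [Category C]
    (F : ∀ a b : L, a ≤ b → (∃ k : ℕ, Nonempty (Set.Icc a b ≃o (Fin k → Bool))) →
      (Set.Icc a b ⥤ C))
    (compat : ∀ (a b c d : L) (hab : a ≤ b) (hcd : c ≤ d)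
      (hB : ∃ k : ℕ, Nonempty (Set.Icc a b ≃o (Fin k → Bool)))
      (hB' : ∃ k : ℕ, Nonempty (Set.Icc c d ≃o (Fin k → Bool)))
      (hca : c ≤ a) (hbd : b ≤ d),
      (show Monotone (Set.inclusion (Set.Icc_subset_Icc hca hbd)) from
          fun _ _ h => h).functor ⋙ F c d hcd hB' = F a b hab hB) :
    ∃! G : L ⥤ C, ∀ (a b : L) (hab : a ≤ b)
      (hB : ∃ k : ℕ, Nonempty (Set.Icc a b ≃o (Fin k → Bool))),
      (show Monotone (fun x : Set.Icc a b => (x : L)) from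
          fun _ _ h => h).functor ⋙ G = F a b hab hB := by
  let S : BooleanIntervalCocone L C := ⟨F, compat⟩
  exact ⟨S.desc, S.restrict_desc, S.desc_unique⟩
end

section
/- Let φ : L → M be a function between finite distributive lattices such that the restriction of φ to every Boolean interval I ⊆ L corestricts to a surjective lattice homomorphism onto a Boolean interval of M. Then φ is a lattice homomorphism on all of L, i.e., φ(x ∨ y) = φ(x) ∨ φ(y) and φ(x ∧ y) = φ(x) ∧ φ(y) for all x, y ∈ L, and φ maps Boolean intervals of L onto Boolean intervals of M. -/
section Aux

variable {L : Type*}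

/-- A covering interval is Boolean (isomorphic to `Fin 1 → Bool`). -/
lemma isBooleanIcc_of_covBy [Lattice L] {a b : L} (hab : a ⋖ b) : IsBooleanIcc a b := by
  classical
  have hnba : ¬ b ≤ a := hab.lt.not_ge
  refine ⟨hab.le, 1, ⟨OrderIso.trans ?_ (OrderIso.funUnique (Fin 1) Bool).symm⟩⟩
  refine
    { toFun := fun x => decide (b ≤ x.1)
      invFun := fun t => if t then ⟨b, hab.le, le_rfl⟩ else ⟨a, le_rfl, hab.le⟩
      left_inv := ?_
      right_inv := ?_
      map_rel_iff' := ?_ }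
  · rintro ⟨x, hx⟩
    rcases hab.wcovBy.eq_or_eq hx.1 hx.2 with rfl | rfl
    · simp [hnba]
    · simp
  · intro t
    cases t <;> simp [hnba]
  · rintro ⟨x, hx⟩ ⟨y, hy⟩
    rcases hab.wcovBy.eq_or_eq hx.1 hx.2 with rfl | rfl <;>
      rcases hab.wcovBy.eq_or_eq hy.1 hy.2 with rfl | rfl <;>
        simp [hnba, hab.le, Subtype.mk_le_mk, le_refl]

/-- A diamond `{m, a, b, a ⊔ b}` in a distributive lattice is a Boolean interval. -/
lemma isBooleanIcc_diamond [DistribLattice L] {m a b : L}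
    (ha : m ⋖ a) (hb : m ⋖ b) (hne : a ≠ b) : IsBooleanIcc m (a ⊔ b) := by
  classical
  have hma : m ≤ a := ha.le
  have hmb : m ≤ b := hb.le
  have hba : ¬ b ≤ a := by
    intro hle
    rcases ha.wcovBy.eq_or_eq hmb hle with h | h
    · exact hb.lt.ne' h
    · exact hne h.symm
  have hab' : ¬ a ≤ b := by
    intro hle
    rcases hb.wcovBy.eq_or_eq hma hle with h | h
    · exact ha.lt.ne' h
    · exact hne h
  have hnam : ¬ a ≤ m := ha.lt.not_ge
  have hnbm : ¬ b ≤ m := hb.lt.not_ge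
  have hxa : ∀ x : L, m ≤ x → x ⊓ a = m ∨ x ⊓ a = a := fun x hx =>
    ha.wcovBy.eq_or_eq (le_inf hx hma) inf_le_right
  have hxb : ∀ x : L, m ≤ x → x ⊓ b = m ∨ x ⊓ b = b := fun x hx =>
    hb.wcovBy.eq_or_eq (le_inf hx hmb) inf_le_right
  have hdecomp : ∀ x : L, x ≤ a ⊔ b → x = (x ⊓ a) ⊔ (x ⊓ b) := by
    intro x hx'
    calc x = x ⊓ (a ⊔ b) := (inf_eq_left.mpr hx').symm
      _ = (x ⊓ a) ⊔ (x ⊓ b) := inf_sup_left x a b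
  refine ⟨le_trans hma le_sup_left, 2, ⟨?_⟩⟩
  refine
    { toFun := fun x => fun i => if i = 0 then decide (a ≤ x.1) else decide (b ≤ x.1)
      invFun := fun f =>
        ⟨(if f 0 then a else m) ⊔ (if f 1 then b else m),
          le_trans (by split <;> simp [hma]) le_sup_left,
          sup_le (by split <;> [exact le_sup_left; exact le_trans hma le_sup_left])
            (by split <;> [exact le_sup_right; exact le_trans hmb le_sup_right])⟩
      left_inv := ?_
      right_inv := ?_
      map_rel_iff' := ?_ }
  · rintro ⟨x, hx⟩
    apply Subtype.ext
    simp only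
    by_cases hax : a ≤ x <;> by_cases hbx : b ≤ x <;> simp [hax, hbx]
    · exact le_antisymm (sup_le hax hbx) hx.2
    · have h1 : x ⊓ a = a := inf_eq_right.mpr hax
      have h2 : x ⊓ b = m := by
        rcases hxb x hx.1 with h | h
        · exact h
        · exact absurd (h ▸ inf_le_left) hbx
      rw [show a ⊔ m = a from sup_eq_left.mpr hma]
      conv_rhs => rw [hdecomp x hx.2, h1, h2, sup_eq_left.mpr hma]
    · have h1 : x ⊓ b = b := inf_eq_right.mpr hbx
      have h2 : x ⊓ a = m := by
        rcases hxa x hx.1 with h | h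
        · exact h
        · exact absurd (h ▸ inf_le_left) hax
      rw [show m ⊔ b = b from sup_eq_right.mpr hmb]
      conv_rhs => rw [hdecomp x hx.2, h1, h2, sup_eq_right.mpr hmb]
    · have h1 : x ⊓ a = m := by
        rcases hxa x hx.1 with h | h
        · exact h
        · exact absurd (h ▸ inf_le_left) hax
      have h2 : x ⊓ b = m := by
        rcases hxb x hx.1 with h | h
        · exact h
        · exact absurd (h ▸ inf_le_left) hbx
      conv_rhs => rw [hdecomp x hx.2, h1, h2, sup_idem]
  · intro f
    funext i
    fin_cases i <;>
      cases h0 : f 0 <;> cases h1 : f 1 <;>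
        simp [h0, h1, hnam, hnbm, hba, hab', sup_eq_left.mpr hma, sup_eq_right.mpr hmb,
          le_sup_left, le_sup_right, sup_idem]
  · rintro ⟨x, hx⟩ ⟨y, hy⟩
    constructor
    · intro hf
      have h0 := hf 0
      have h1 := hf 1
      simp only [if_pos rfl] at h0
      have h1' : decide (b ≤ x) ≤ decide (b ≤ y) := by simpa using h1
      have haimp : a ≤ x → a ≤ y := by
        intro hax
        by_contra hay
        simp [hax, hay, Bool.le_iff_imp] at h0
      have hbimp : b ≤ x → b ≤ y := by
        intro hbx
        by_contra hby
        simp [hbx, hby, Bool.le_iff_imp] at h1'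
      show x ≤ y
      have hxd := hdecomp x hx.2
      rw [hxd]
      apply sup_le
      · rcases hxa x hx.1 with h | h
        · exact h ▸ hy.1
        · have hax : a ≤ x := h ▸ inf_le_left
          exact le_trans inf_le_right (haimp hax)
      · rcases hxb x hx.1 with h | h
        · exact h ▸ hy.1
        · have hbx : b ≤ x := h ▸ inf_le_left
          exact le_trans inf_le_right (hbimp hbx)
    · intro hxy i
      have hxy' : x ≤ y := hxy
      show (if i = 0 then decide (a ≤ x) else decide (b ≤ x)) ≤
        (if i = 0 then decide (a ≤ y) else decide (b ≤ y))
      split <;>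
      · simp only [Bool.le_iff_imp, decide_eq_true_eq]
        exact fun hle => hle.trans hxy'

end Aux

/-- If a function between finite distributive lattices restricts, on every Boolean
interval, to a surjective lattice homomorphism onto a Boolean interval, then it
is a lattice homomorphism globally and maps Boolean intervals onto Boolean
intervals. -/
theorem latticeHom_of_local_boolean_condition
    (L M : Type*) [DistribLattice L] [Fintype L] [DistribLattice M] [Fintype M]
    (φ : L → M)
    (h : ∀ a b : L, IsBooleanIcc a b →
      ((∀ x ∈ Set.Icc a b, ∀ y ∈ Set.Icc a b,
          φ (x ⊔ y) = φ x ⊔ φ y ∧ φ (x ⊓ y) = φ x ⊓ φ y) ∧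
        ∃ c d : M, IsBooleanIcc c d ∧ φ '' Set.Icc a b = Set.Icc c d)) :
    (∀ x y : L, φ (x ⊔ y) = φ x ⊔ φ y ∧ φ (x ⊓ y) = φ x ⊓ φ y) ∧
    (∀ a b : L, IsBooleanIcc a b →
      ∃ c d : M, IsBooleanIcc c d ∧ φ '' Set.Icc a b = Set.Icc c d) := by
  classical
  letI : LocallyFiniteOrder L := Fintype.toLocallyFiniteOrder
  -- covering pairs map to comparable pairs
  have hcov : ∀ a b : L, a ⋖ b → φ a ≤ φ b := by
    intro a b hab
    have := ((h a b (isBooleanIcc_of_covBy hab)).1 a ⟨le_rfl, hab.le⟩ b ⟨hab.le, le_rfl⟩).1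
    rw [sup_eq_right.mpr hab.le] at this
    rw [this]
    exact le_sup_left
  -- monotonicity
  have hmono : ∀ x y : L, x ≤ y → φ x ≤ φ y := by
    have key : ∀ n : ℕ, ∀ x y : L, (Set.Icc x y).ncard ≤ n → x ≤ y → φ x ≤ φ y := by
      intro n
      induction n with
      | zero =>
        intro x y hcard hxy
        have : 0 < (Set.Icc x y).ncard :=
          (Set.ncard_pos (Set.toFinite _)).mpr ⟨x, le_rfl, hxy⟩
        omega
      | succ n ih =>
        intro x y hcard hxy
        rcases eq_or_lt_of_le hxy with rfl | hlt
        · exact le_rfl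
        obtain ⟨c, hxc, hcy⟩ := exists_covBy_le_of_lt hlt
        refine (hcov x c hxc).trans (ih c y ?_ hcy)
        have hsub : Set.Icc c y ⊂ Set.Icc x y := by
          constructor
          · exact Set.Icc_subset_Icc_left hxc.le
          · intro hsub'
            have := hsub' ⟨le_rfl, hxy⟩
            exact hxc.lt.not_ge this.1
        have := Set.ncard_lt_ncard hsub (Set.toFinite _)
        omega
    intro x y hxy
    exact key (Set.Icc x y).ncard x y le_rfl hxy
  -- diamond identities
  have hdiamJ : ∀ m a b : L, m ⋖ a → m ⋖ b → a ≠ b → φ (a ⊔ b) = φ a ⊔ φ b := by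
    intro m a b ha hb hne
    exact ((h m (a ⊔ b) (isBooleanIcc_diamond ha hb hne)).1
      a ⟨ha.le, le_sup_left⟩ b ⟨hb.le, le_sup_right⟩).1
  have hdiamM : ∀ t a b : L, a ⋖ t → b ⋖ t → a ≠ b → φ (a ⊓ b) = φ a ⊓ φ b := by
    intro t a b hat hbt hne
    have hnba : ¬ b ≤ a := by
      intro hle
      rcases hbt.wcovBy.eq_or_eq hle hat.le with h' | h'
      · exact hne h'
      · exact hat.lt.ne h'
    have hsup : a ⊔ b = t := by
      rcases hat.wcovBy.eq_or_eq le_sup_left (sup_le hat.le hbt.le) with h' | h'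
      · exact absurd (h' ▸ le_sup_right) hnba
      · exact h'
    have hca : a ⋖ a ⊔ b := hsup ▸ hat
    have hcb : b ⋖ a ⊔ b := hsup ▸ hbt
    have h1 : a ⊓ b ⋖ a := inf_covBy_of_covBy_sup_right hcb
    have h2 : a ⊓ b ⋖ b := inf_covBy_of_covBy_sup_left hca
    have hbool : IsBooleanIcc (a ⊓ b) t := hsup ▸ isBooleanIcc_diamond h1 h2 hne
    exact ((h (a ⊓ b) t hbool).1 a ⟨inf_le_left, hat.le⟩ b ⟨inf_le_right, hbt.le⟩).2
  -- join preservation, step lemma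
  have hsubJ : ∀ n : ℕ, ∀ m a y : L, (Set.Icc m y).ncard ≤ n → m ⋖ a → m ≤ y →
      φ (a ⊔ y) = φ a ⊔ φ y := by
    intro n
    induction n with
    | zero =>
      intro m a y hcard _ hmy
      have : 0 < (Set.Icc m y).ncard := (Set.ncard_pos (Set.toFinite _)).mpr ⟨m, le_rfl, hmy⟩
      omega
    | succ n ih =>
      intro m a y hcard hma hmy
      rcases eq_or_lt_of_le hmy with rfl | hlt
      · rw [sup_eq_left.mpr hma.le, sup_eq_left.mpr (hmono _ _ hma.le)]
      obtain ⟨b, hmb, hby⟩ := exists_covBy_le_of_lt hlt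
      by_cases hab : a = b
      · subst hab
        rw [sup_eq_right.mpr hby, sup_eq_right.mpr (hmono _ _ hby)]
      · have hiab : a ⊓ b = m := by
          rcases hma.wcovBy.eq_or_eq (le_inf hma.le hmb.le) inf_le_left with h' | h'
          · exact h'
          · exfalso
            have hab' : a ≤ b := h' ▸ inf_le_right
            rcases hmb.wcovBy.eq_or_eq hma.le hab' with h'' | h''
            · exact hma.lt.ne' h''
            · exact hab h''
        have hbsup : b ⋖ a ⊔ b := covBy_sup_of_inf_covBy_left (hiab ▸ hma)
        have hcard' : (Set.Icc b y).ncard ≤ n := by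
          have hsub : Set.Icc b y ⊂ Set.Icc m y := by
            constructor
            · exact Set.Icc_subset_Icc_left hmb.le
            · intro hsub'
              exact hmb.lt.not_ge (hsub' ⟨le_rfl, hmy⟩).1
          have := Set.ncard_lt_ncard hsub (Set.toFinite _)
          omega
        have hstep := ih b (a ⊔ b) y hcard' hbsup hby
        have heq : (a ⊔ b) ⊔ y = a ⊔ y := by
          rw [sup_assoc, sup_eq_right.mpr hby]
        rw [heq] at hstep
        rw [hstep, hdiamJ m a b hma hmb hab, sup_assoc, sup_eq_right.mpr (hmono _ _ hby)]
  -- join preservation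
  have hjoin : ∀ x y : L, φ (x ⊔ y) = φ x ⊔ φ y := by
    have key : ∀ n : ℕ, ∀ x y : L, (Set.Icc (x ⊓ y) x).ncard ≤ n →
        φ (x ⊔ y) = φ x ⊔ φ y := by
      intro n
      induction n with
      | zero =>
        intro x y hcard
        have : 0 < (Set.Icc (x ⊓ y) x).ncard :=
          (Set.ncard_pos (Set.toFinite _)).mpr ⟨x, inf_le_left, le_rfl⟩
        omega
      | succ n ih =>
        intro x y hcard
        rcases eq_or_lt_of_le (inf_le_left : x ⊓ y ≤ x) with heq | hlt
        · have hxy : x ≤ y := by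
            rw [← heq]; exact inf_le_right
          rw [sup_eq_right.mpr hxy, sup_eq_right.mpr (hmono _ _ hxy)]
        obtain ⟨a, hca, hax⟩ := exists_covBy_le_of_lt hlt
        have hstep := hsubJ (Set.Icc (x ⊓ y) y).ncard (x ⊓ y) a y le_rfl hca inf_le_right
        have hinf : x ⊓ (a ⊔ y) = a := by
          rw [inf_sup_left, inf_eq_right.mpr hax]
          exact sup_eq_left.mpr hca.le
        have hcard' : (Set.Icc (x ⊓ (a ⊔ y)) x).ncard ≤ n := by
          rw [hinf]
          have hsub : Set.Icc a x ⊂ Set.Icc (x ⊓ y) x := by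
            constructor
            · exact Set.Icc_subset_Icc_left hca.le
            · intro hsub'
              exact hca.lt.not_ge (hsub' ⟨le_rfl, inf_le_left⟩).1
          have := Set.ncard_lt_ncard hsub (Set.toFinite _)
          omega
        have hmain := ih x (a ⊔ y) hcard'
        have heq2 : x ⊔ (a ⊔ y) = x ⊔ y := by
          rw [← sup_assoc, sup_eq_left.mpr hax]
        rw [heq2] at hmain
        rw [hmain, hstep, ← sup_assoc, sup_eq_left.mpr (hmono _ _ hax)]
    intro x y
    exact key (Set.Icc (x ⊓ y) x).ncard x y le_rfl
  -- meet preservation, step lemma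
  have hsubM : ∀ n : ℕ, ∀ m a y : L, (Set.Icc y m).ncard ≤ n → a ⋖ m → y ≤ m →
      φ (a ⊓ y) = φ a ⊓ φ y := by
    intro n
    induction n with
    | zero =>
      intro m a y hcard _ hym
      have : 0 < (Set.Icc y m).ncard := (Set.ncard_pos (Set.toFinite _)).mpr ⟨m, hym, le_rfl⟩
      omega
    | succ n ih =>
      intro m a y hcard ham hym
      rcases eq_or_lt_of_le hym with rfl | hlt
      · rw [inf_eq_left.mpr ham.le, inf_eq_left.mpr (hmono _ _ ham.le)]
      obtain ⟨b, hyb, hbm⟩ := exists_le_covBy_of_lt hlt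
      by_cases hab : a = b
      · subst hab
        rw [inf_eq_right.mpr hyb, inf_eq_right.mpr (hmono _ _ hyb)]
      · have hsab : a ⊔ b = m := by
          rcases ham.wcovBy.eq_or_eq le_sup_left (sup_le ham.le hbm.le) with h' | h'
          · exfalso
            have hba' : b ≤ a := h' ▸ le_sup_right
            rcases hbm.wcovBy.eq_or_eq hba' ham.le with h'' | h''
            · exact hab h''
            · exact ham.lt.ne h''
          · exact h'
        have hbinf : a ⊓ b ⋖ b := inf_covBy_of_covBy_sup_left (hsab ▸ ham)
        have hcard' : (Set.Icc y b).ncard ≤ n := by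
          have hsub : Set.Icc y b ⊂ Set.Icc y m := by
            constructor
            · exact Set.Icc_subset_Icc_right hbm.le
            · intro hsub'
              exact hbm.lt.not_ge (hsub' ⟨hym, le_rfl⟩).2
          have := Set.ncard_lt_ncard hsub (Set.toFinite _)
          omega
        have hstep := ih b (a ⊓ b) y hcard' hbinf hyb
        have heq : (a ⊓ b) ⊓ y = a ⊓ y := by
          rw [inf_assoc, inf_eq_right.mpr hyb]
        rw [heq] at hstep
        rw [hstep, hdiamM m a b ham hbm hab, inf_assoc, inf_eq_right.mpr (hmono _ _ hyb)]
  -- meet preservation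
  have hmeet : ∀ x y : L, φ (x ⊓ y) = φ x ⊓ φ y := by
    have key : ∀ n : ℕ, ∀ x y : L, (Set.Icc x (x ⊔ y)).ncard ≤ n →
        φ (x ⊓ y) = φ x ⊓ φ y := by
      intro n
      induction n with
      | zero =>
        intro x y hcard
        have : 0 < (Set.Icc x (x ⊔ y)).ncard :=
          (Set.ncard_pos (Set.toFinite _)).mpr ⟨x, le_rfl, le_sup_left⟩
        omega
      | succ n ih =>
        intro x y hcard
        rcases eq_or_lt_of_le (le_sup_left : x ≤ x ⊔ y) with heq | hlt
        · have hyx : y ≤ x := by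
            rw [heq]; exact le_sup_right
          rw [inf_eq_right.mpr hyx, inf_eq_right.mpr (hmono _ _ hyx)]
        obtain ⟨a, hxa, hac⟩ := exists_le_covBy_of_lt hlt
        have hstep := hsubM (Set.Icc y (x ⊔ y)).ncard (x ⊔ y) a y le_rfl hac le_sup_right
        have hsup2 : x ⊔ (a ⊓ y) = a := by
          rw [sup_inf_left, sup_eq_right.mpr hxa]
          exact inf_eq_left.mpr hac.le
        have hcard' : (Set.Icc x (x ⊔ (a ⊓ y))).ncard ≤ n := by
          rw [hsup2]
          have hsub : Set.Icc x a ⊂ Set.Icc x (x ⊔ y) := by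
            constructor
            · exact Set.Icc_subset_Icc_right hac.le
            · intro hsub'
              exact hac.lt.not_ge (hsub' ⟨le_sup_left, le_rfl⟩).2
          have := Set.ncard_lt_ncard hsub (Set.toFinite _)
          omega
        have hmain := ih x (a ⊓ y) hcard'
        have heq2 : x ⊓ (a ⊓ y) = x ⊓ y := by
          rw [← inf_assoc, inf_eq_left.mpr hxa]
        rw [heq2] at hmain
        rw [hmain, hstep, ← inf_assoc, inf_eq_left.mpr (hmono _ _ hxa)]
    intro x y
    exact key (Set.Icc x (x ⊔ y)).ncard x y le_rfl
  exact ⟨fun x y => ⟨hjoin x y, hmeet x y⟩, fun a b hab => (h a b hab).2⟩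
end

section
/- Every compact pospace is locally order-convex: if P is a compact Hausdorff space equipped with a partial order whose graph is closed in P × P, then the topology of P has a basis of open sets each of which is order-convex (contains z whenever it contains x and y with x ≤ z ≤ y). -/
/-- The order-convex hull of a set. -/
def ordHull {P : Type*} [PartialOrder P] (S : Set P) : Set P :=
  {z | (∃ a ∈ S, a ≤ z) ∧ ∃ b ∈ S, z ≤ b}

lemma subset_ordHull {P : Type*} [PartialOrder P] (S : Set P) : S ⊆ ordHull S :=
  fun z hz => ⟨⟨z, hz, le_refl z⟩, ⟨z, hz, le_refl z⟩⟩

lemma ordHull_mono {P : Type*} [PartialOrder P] {S T : Set P} (h : S ⊆ T) :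
    ordHull S ⊆ ordHull T := by
  rintro z ⟨⟨a, ha, haz⟩, ⟨b, hb, hzb⟩⟩
  exact ⟨⟨a, h ha, haz⟩, ⟨b, h hb, hzb⟩⟩

lemma ordHull_ordConnected {P : Type*} [PartialOrder P] (S : Set P) :
    (ordHull S).OrdConnected := by
  constructor
  rintro a ⟨⟨p, hp, hpa⟩, -⟩ b ⟨-, ⟨q, hq, hbq⟩⟩ z hz
  exact ⟨⟨p, hp, hpa.trans hz.1⟩, ⟨q, hq, hz.2.trans hbq⟩⟩

lemma ordHull_subset_of_ordConnected {P : Type*} [PartialOrder P] {S : Set P}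
    (h : S.OrdConnected) : ordHull S ⊆ S := by
  rintro z ⟨⟨a, ha, haz⟩, ⟨b, hb, hzb⟩⟩
  exact h.out ha hb ⟨haz, hzb⟩

/-- The hull of a compact set in a compact pospace is closed. -/
lemma isClosed_ordHull {P : Type*} [TopologicalSpace P] [CompactSpace P] [T2Space P]
    [PartialOrder P] (hclosed : IsClosed {p : P × P | p.1 ≤ p.2})
    {K : Set P} (hK : IsClosed K) : IsClosed (ordHull K) := by
  have h1 : ordHull K = (Prod.snd '' ({p : P × P | p.1 ≤ p.2} ∩ K ×ˢ Set.univ)) ∩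
      (Prod.fst '' ({p : P × P | p.1 ≤ p.2} ∩ Set.univ ×ˢ K)) := by
    ext z
    constructor
    · rintro ⟨⟨a, ha, haz⟩, ⟨b, hb, hzb⟩⟩
      exact ⟨⟨(a, z), ⟨haz, ha, trivial⟩, rfl⟩, ⟨(z, b), ⟨hzb, trivial, hb⟩, rfl⟩⟩
    · rintro ⟨⟨⟨a, z'⟩, ⟨hle, ha, -⟩, rfl⟩, ⟨⟨z'', b⟩, ⟨hle', -, hb⟩, rfl⟩⟩
      exact ⟨⟨a, ha, hle⟩, ⟨b, hb, hle'⟩⟩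
  rw [h1]
  have hc1 : IsCompact ({p : P × P | p.1 ≤ p.2} ∩ K ×ˢ Set.univ) :=
    (hclosed.inter (hK.prod isClosed_univ)).isCompact
  have hc2 : IsCompact ({p : P × P | p.1 ≤ p.2} ∩ Set.univ ×ˢ K) :=
    (hclosed.inter (isClosed_univ.prod hK)).isCompact
  exact ((hc1.image continuous_snd).isClosed).inter ((hc2.image continuous_fst).isClosed)

/-- Shrinking lemma: a compact order-convex set inside an open set has a compact
order-convex neighborhood inside the open set. -/
lemma exists_ordConnected_nhd {P : Type*} [TopologicalSpace P] [CompactSpace P] [T2Space P]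
    [PartialOrder P] (hclosed : IsClosed {p : P × P | p.1 ≤ p.2})
    {U S : Set P} (hU : IsOpen U) (hScl : IsClosed S) (hSoc : S.OrdConnected) (hSU : S ⊆ U) :
    ∃ T : Set P, IsClosed T ∧ T.OrdConnected ∧ T ⊆ U ∧ S ⊆ interior T := by
  have hgraphc : IsOpen {p : P × P | p.1 ≤ p.2}ᶜ := hclosed.isOpen_compl
  have hScpt : IsCompact S := hScl.isCompact
  -- For each c outside U, find open N ⊇ S and open B ∋ c with ordHull (closure N) ∩ B = ∅.
  have key : ∀ c : P, ∃ N B : Set P, IsOpen N ∧ S ⊆ N ∧ IsOpen B ∧ (c ∉ U → c ∈ B) ∧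
      ordHull (closure N) ∩ B = ∅ := by
    intro c
    by_cases hc : c ∈ U
    · exact ⟨Set.univ, ∅, isOpen_univ, Set.subset_univ S, isOpen_empty,
        fun h => absurd hc h, Set.inter_empty _⟩
    have hcH : c ∉ ordHull S := fun h =>
      hc (hSU (ordHull_subset_of_ordConnected hSoc h))
    rw [ordHull, Set.mem_setOf_eq, not_and_or] at hcH
    rcases hcH with hup | hdown
    · -- no a ∈ S with a ≤ c : separate S ×ˢ {c} from the graph
      push_neg at hup
      have hsub : S ×ˢ ({c} : Set P) ⊆ {p : P × P | p.1 ≤ p.2}ᶜ := by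
        rintro ⟨a, c'⟩ ⟨ha, hc'⟩
        simp only [Set.mem_singleton_iff] at hc'; subst hc'
        exact fun hle => hup a ha hle
      obtain ⟨u, v, huo, hvo, hSu, hcv, huv⟩ :=
        generalized_tube_lemma hScpt isCompact_singleton hgraphc hsub
      obtain ⟨N, hNo, hSN, hNcl⟩ := normal_exists_closure_subset hScl huo hSu
      refine ⟨N, v, hNo, hSN, hvo, fun _ => hcv rfl, ?_⟩
      ext z
      simp only [Set.mem_inter_iff, Set.mem_empty_iff_false, iff_false, not_and]
      rintro ⟨⟨a, ha, haz⟩, -⟩ hzv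
      exact huv (Set.mk_mem_prod (hNcl ha) hzv) haz
    · -- no b ∈ S with c ≤ b : separate {c} ×ˢ S from the graph
      push_neg at hdown
      have hsub : ({c} : Set P) ×ˢ S ⊆ {p : P × P | p.1 ≤ p.2}ᶜ := by
        rintro ⟨c', b⟩ ⟨hc', hb⟩
        simp only [Set.mem_singleton_iff] at hc'; subst hc'
        exact fun hle => hdown b hb hle
      obtain ⟨u, v, huo, hvo, hcu, hSv, huv⟩ :=
        generalized_tube_lemma isCompact_singleton hScpt hgraphc hsub
      obtain ⟨N, hNo, hSN, hNcl⟩ := normal_exists_closure_subset hScl hvo hSv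
      refine ⟨N, u, hNo, hSN, huo, fun _ => hcu rfl, ?_⟩
      ext z
      simp only [Set.mem_inter_iff, Set.mem_empty_iff_false, iff_false, not_and]
      rintro ⟨-, ⟨b, hb, hzb⟩⟩ hzu
      exact huv (Set.mk_mem_prod hzu (hNcl hb)) hzb
  choose N B hNo hSN hBo hcB hdisj using key
  -- cover Uᶜ by finitely many B c
  have hUc : IsCompact Uᶜ := hU.isClosed_compl.isCompact
  obtain ⟨t, -, hcov⟩ := hUc.elim_nhds_subcover B (fun c hc => (hBo c).mem_nhds (hcB c hc))
  -- intersect the corresponding N's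
  set M : Set P := ⋂ c ∈ t, N c with hM
  have hMo : IsOpen M := isOpen_biInter_finset fun c _ => hNo c
  have hSM : S ⊆ M := Set.subset_iInter₂ fun c _ => hSN c
  refine ⟨ordHull (closure M), isClosed_ordHull hclosed isClosed_closure,
    ordHull_ordConnected _, ?_, ?_⟩
  · intro z hz
    by_contra hzU
    obtain ⟨c, hct, hzB⟩ := Set.mem_iUnion₂.1 (hcov hzU)
    have hMN : closure M ⊆ closure (N c) :=
      closure_mono (Set.biInter_subset_of_mem hct)
    have : z ∈ ordHull (closure (N c)) ∩ B c := ⟨ordHull_mono hMN hz, hzB⟩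
    rw [hdisj c] at this
    exact this
  · exact hSM.trans (interior_maximal (subset_closure.trans (subset_ordHull _)) hMo)

/-- Every compact pospace is locally order-convex: a compact Hausdorff space with
a partial order whose graph is closed has a basis of open order-convex sets. -/
theorem compact_pospace_locally_order_convex
    (P : Type*) [TopologicalSpace P] [CompactSpace P] [T2Space P] [PartialOrder P]
    (hclosed : IsClosed {p : P × P | p.1 ≤ p.2}) :
    ∃ B : Set (Set P), TopologicalSpace.IsTopologicalBasis B ∧
      ∀ s ∈ B, s.OrdConnected := by
  refine ⟨{s | IsOpen s ∧ s.OrdConnected}, ?_, fun s hs => hs.2⟩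
  apply TopologicalSpace.isTopologicalBasis_of_isOpen_of_nhds (fun u hu => hu.1)
  intro x u hxu huo
  -- recursively build increasing closed ord-connected sets
  have step : ∀ S : {S : Set P // IsClosed S ∧ S.OrdConnected ∧ S ⊆ u},
      ∃ T : {S : Set P // IsClosed S ∧ S.OrdConnected ∧ S ⊆ u}, S.1 ⊆ interior T.1 := by
    rintro ⟨S, hScl, hSoc, hSu⟩
    obtain ⟨T, hTcl, hToc, hTu, hint⟩ := exists_ordConnected_nhd hclosed huo hScl hSoc hSu
    exact ⟨⟨T, hTcl, hToc, hTu⟩, hint⟩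
  choose g hg using step
  set K : ℕ → {S : Set P // IsClosed S ∧ S.OrdConnected ∧ S ⊆ u} :=
    fun n => g^[n] ⟨{x}, isClosed_singleton, Set.ordConnected_singleton,
      Set.singleton_subset_iff.2 hxu⟩ with hK
  have hsucc : ∀ n, K (n + 1) = g (K n) := fun n => Function.iterate_succ_apply' g n _
  have hstep : ∀ n, (K n).1 ⊆ interior (K (n + 1)).1 := by
    intro n; rw [hsucc n]; exact hg (K n)
  have hmono : Monotone fun n => (K n).1 :=
    monotone_nat_of_le_succ fun n => (hstep n).trans interior_subset
  refine ⟨⋃ n, (K n).1, ⟨?_, ?_⟩, ?_, ?_⟩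
  · -- open
    rw [isOpen_iff_mem_nhds]
    intro z hz
    obtain ⟨n, hn⟩ := Set.mem_iUnion.1 hz
    exact Filter.mem_of_superset
      (mem_interior_iff_mem_nhds.1 (hstep n hn))
      ((Set.subset_iUnion (fun n => (K n).1) (n + 1)))
  · -- ord-connected
    constructor
    intro a ha b hb z hz
    obtain ⟨m, hm⟩ := Set.mem_iUnion.1 ha
    obtain ⟨n, hn⟩ := Set.mem_iUnion.1 hb
    exact Set.mem_iUnion.2 ⟨max m n, ((K (max m n)).2.2.1).out
      (hmono (le_max_left m n) hm) (hmono (le_max_right m n) hn) hz⟩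
  · -- contains x
    exact Set.mem_iUnion.2 ⟨0, rfl⟩
  · -- contained in u
    exact Set.iUnion_subset fun n => (K n).2.2.2
end
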